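/- arXiv:1412.6453 — 2 statements merged into one kernel-verified Lean document; each statement's English description precedes it below -/
import Mathlib

section
/- Let R be a Noetherian F-finite normal domain of characteristic p > 0, Δ ≥ 0 an effective ℚ-divisor, 𝔞 ⊆ R a nonzero ideal, t ≥ 0, and 0 ≠ f ∈ R with corresponding principal Cartier divisor H = div(f). Then f·τ(R, Δ, 𝔞^t) = τ(R, Δ + H, 𝔞^t). -/
/-!
Statement 2: for `0 ≠ f ∈ R` with principal Cartier divisor `H = div(f)`,
`f·τ(R, Δ, 𝔞^t) = τ(R, Δ + H, 𝔞^t)`.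

The ℚ-divisor `Δ ≥ 0` enters only through the family
`C e = Hom_R(F^e_* R(⌈(p^e−1)Δ⌉), R)` of `p^{-e}`-linear maps; the corresponding family
for `Δ + H` is `{φ(f^{p^e−1}·−) : φ ∈ C e}`, since
`Hom_R(F^e_* R(⌈(p^e−1)(Δ+H)⌉), R) = Hom_R(F^e_* R(⌈(p^e−1)Δ⌉), R) · f^{p^e−1}`.
-/

/-- `Hom_R(F^e_* R, R)`: the set of additive `p^{-e}`-linear maps `φ : R → R`. -/
def PeLin (R : Type) [CommRing R] (p e : ℕ) : Set (R →+ R) :=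
  {φ | ∀ r x : R, φ (r ^ p ^ e * x) = r * φ x}

/-- `τ` is the big test ideal `τ(R, Δ, 𝔞^t)`: the smallest nonzero ideal `J` with
`φ(F^e_*(𝔞^{⌈p^e t⌉} J)) ⊆ J` for all `e > 0`, `φ ∈ C e = Hom_R(F^e_* R(⌈(p^e−1)Δ⌉), R)`. -/
def IsBigTestIdeal {R : Type} [CommRing R] (p : ℕ) (C : ℕ → Set (R →+ R))
    (a : Ideal R) (t : ℝ) (τ : Ideal R) : Prop :=
  IsLeast {J : Ideal R | J ≠ ⊥ ∧ ∀ e : ℕ, 0 < e → ∀ φ ∈ C e,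
    ∀ x ∈ a ^ ⌈(p : ℝ) ^ e * t⌉₊ * J, φ x ∈ J} τ

/-!
Multiplication by `f` matches the two families of maps: if `φ` is `p^{-e}`-linear then
`φ(f^{p^e-1} · f y) = φ(f^{p^e} y) = f φ(y)`. Hence `f τ` is compatible with the family of
`Δ + div f`, and conversely, if `J` is compatible with that family, then so is `(J : f)` with the
family of `Δ`. Minimality of `τ` gives `τ ⊆ (J : f)`, i.e. `f τ ⊆ J`.
-/

theorem PeLin.map_pow_sub_one_mul_mul {R : Type} [CommRing R] {p e : ℕ} (hp : 0 < p) {φ : R →+ R}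
    (hφ : φ ∈ PeLin R p e) (f x : R) : φ (f ^ (p ^ e - 1) * (f * x)) = f * φ x := by
  rw [← mul_assoc, ← pow_succ, Nat.sub_add_cancel (Nat.one_le_pow _ _ hp), hφ]

theorem Ideal.span_singleton_mul_le_iff_le_colon {R : Type} [CommRing R] {f : R}
    {I J : Ideal R} : Ideal.span {f} * I ≤ J ↔ I ≤ J.colon {f} := by
  rw [Ideal.span_singleton_mul_le_iff, SetLike.le_def]
  simp only [Submodule.mem_colon_singleton, smul_eq_mul, mul_comm f]

theorem Ideal.mul_mem_mul_of_mem_mul_colon {R : Type} [CommRing R] {f x : R} {I J : Ideal R}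
    (hx : x ∈ I * J.colon {f}) : f * x ∈ I * J := by
  have hf : Ideal.span {f} * J.colon {f} ≤ J := Ideal.span_singleton_mul_le_iff_le_colon.mpr le_rfl
  have hfx : f * x ∈ Ideal.span {f} * (I * J.colon {f}) :=
    Ideal.mul_mem_mul (Ideal.mem_span_singleton_self f) hx
  rw [mul_left_comm] at hfx
  exact Ideal.mul_mono_right hf hfx

/-- With `b e = 𝔞^{⌈p^e t⌉}` this is the closure condition in `IsBigTestIdeal`. -/
def IsCompatible {R : Type} [CommRing R] (C : ℕ → Set (R →+ R)) (b : ℕ → Ideal R)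
    (J : Ideal R) : Prop :=
  ∀ e : ℕ, 0 < e → ∀ φ ∈ C e, ∀ x ∈ b e * J, φ x ∈ J

/-- The family of the pair `Δ + div f` when `C` is the family of `Δ`. -/
def addPrincipalDivisor {R : Type} [CommRing R] (p : ℕ) (C : ℕ → Set (R →+ R)) (f : R) :
    ℕ → Set (R →+ R) :=
  fun e => {ψ : R →+ R | ∃ φ ∈ C e, ∀ x : R, ψ x = φ (f ^ (p ^ e - 1) * x)}

namespace IsCompatible

variable {R : Type} [CommRing R] {p : ℕ} {C : ℕ → Set (R →+ R)} {b : ℕ → Ideal R}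

theorem span_singleton_mul (hp : 0 < p) (hC : ∀ e, C e ⊆ PeLin R p e) {τ : Ideal R}
    (hτ : IsCompatible C b τ) (f : R) :
    IsCompatible (addPrincipalDivisor p C f) b (Ideal.span {f} * τ) := by
  rintro e he ψ ⟨φ, hφ, hψ⟩ x hx
  rw [mul_left_comm] at hx
  obtain ⟨y, hy, rfl⟩ := Ideal.mem_span_singleton_mul.mp hx
  rw [hψ, PeLin.map_pow_sub_one_mul_mul hp (hC e hφ)]
  exact Ideal.mem_span_singleton_mul.mpr ⟨φ y, hτ e he φ hφ y hy, rfl⟩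

theorem colon_singleton (hp : 0 < p) (hC : ∀ e, C e ⊆ PeLin R p e) {f : R} {J : Ideal R}
    (hJ : IsCompatible (addPrincipalDivisor p C f) b J) : IsCompatible C b (J.colon {f}) := by
  intro e he φ hφ x hx
  have hψ := hJ e he (φ.comp (AddMonoidHom.mulLeft (f ^ (p ^ e - 1)))) ⟨φ, hφ, fun _ => rfl⟩
    (f * x) (Ideal.mul_mem_mul_of_mem_mul_colon hx)
  rw [AddMonoidHom.comp_apply, AddMonoidHom.coe_mulLeft,
    PeLin.map_pow_sub_one_mul_mul hp (hC e hφ)] at hψ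
  rwa [Submodule.mem_colon_singleton, smul_eq_mul, mul_comm]

end IsCompatible

theorem bigTestIdeal_add_principal_divisor_general
    {R : Type} [CommRing R] [IsDomain R]
    (p : ℕ) (hp : p.Prime)
    (C : ℕ → Set (R →+ R)) (hC : ∀ e, C e ⊆ PeLin R p e)
       -- `C e = Hom_R(F^e_* R(⌈(p^e−1)Δ⌉), R)` for the effective ℚ-divisor Δ ≥ 0
    (a : Ideal R)
    (t : ℝ)
    (f : R) (hf : f ≠ 0)
    (τ : Ideal R) (hτ : IsBigTestIdeal p C a t τ) :
    -- `f·τ(R, Δ, 𝔞^t)` is the big test ideal of `(R, Δ + H, 𝔞^t)`, `H = div_R(f)`: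
    IsBigTestIdeal p
      (fun e => {ψ : R →+ R | ∃ φ ∈ C e, ∀ x : R, ψ x = φ (f ^ (p ^ e - 1) * x)})
      a t (Ideal.span {f} * τ) := by
  obtain ⟨⟨hτ0, hτ⟩, hτ_least⟩ := hτ
  have hfτ : Ideal.span {f} * τ ≠ ⊥ :=
    mul_ne_zero (by simpa [Ideal.span_singleton_eq_bot] using hf) hτ0
  refine ⟨⟨hfτ, IsCompatible.span_singleton_mul (b := fun e => a ^ ⌈(p : ℝ) ^ e * t⌉₊)
    hp.pos hC hτ f⟩, ?_⟩
  rintro J ⟨hJ0, hJ⟩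
  exact Ideal.span_singleton_mul_le_iff_le_colon.mpr <| hτ_least
    ⟨ne_bot_of_le_ne_bot hJ0 Ideal.le_colon, IsCompatible.colon_singleton hp.pos hC hJ⟩

theorem bigTestIdeal_add_principal_divisor
    {R : Type} [CommRing R] [IsDomain R] [IsNoetherianRing R] [IsIntegrallyClosed R]
    (p : ℕ) (hp : p.Prime) [CharP R p] [ExpChar R p]
    (hFfin : (frobenius R p).Finite)  -- R is F-finite
    (C : ℕ → Set (R →+ R)) (hC : ∀ e, C e ⊆ PeLin R p e)
       -- `C e = Hom_R(F^e_* R(⌈(p^e−1)Δ⌉), R)` for the effective ℚ-divisor Δ ≥ 0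
    (a : Ideal R) (ha : a ≠ ⊥)
    (t : ℝ) (ht : 0 ≤ t)
    (f : R) (hf : f ≠ 0)
    (τ : Ideal R) (hτ : IsBigTestIdeal p C a t τ) :
    -- `f·τ(R, Δ, 𝔞^t)` is the big test ideal of `(R, Δ + H, 𝔞^t)`, `H = div_R(f)`:
    IsBigTestIdeal p
      (fun e => {ψ : R →+ R | ∃ φ ∈ C e, ∀ x : R, ψ x = φ (f ^ (p ^ e - 1) * x)})
      a t (Ideal.span {f} * τ) :=
  bigTestIdeal_add_principal_divisor_general p hp C hC a t f hf τ hτ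
end

section
/- Let R be an F-finite normal domain of characteristic p > 0, D a Weil divisor on Spec R, and S = ⊕_{i≥0} R(iD) the symbolic Rees algebra, with its ℤ[1/p^e]-grading on F^e_* S. Then every homogeneous S-linear map φ_S : F^e_* S → S is completely determined by its restriction φ = φ_S|_{F^e_* R} : F^e_* R → R to the degree-zero part; that is, the extension of Lemma (extension of p^{-e}-linear maps to S) gives a bijection between R-linear maps F^e_* R → R and homogeneous S-linear maps F^e_* S → S. -/
/-!
Writing `a ∈ K` as `b / c` with `b, c ∈ R`, the element `c^{p^e} a` lies in `R`, so
`p^{-e}`-linearity and cancellation of `c` spread agreement on `R` to all of `K`. A monomial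
`x X^{p^e i}` is `(y X^i)^{p^e} · (x / y^{p^e})` for any nonzero `y ∈ R(iD)`, and such a `y` exists
because `D` has finite support. Monomials of the other degrees are killed by homogeneity.
-/

open scoped Pointwise

/-- Abstract divisorial data on a normal (Krull) domain `R` with fraction field `K`:
a family of divisorial valuations `v q` indexed by the set `P` of height-one primes of
`Spec R`, such that `R` is the intersection of the corresponding valuation rings
(this encodes normality of `R`). -/
structure KrullData (R K : Type) [CommRing R] [IsDomain R] [Field K] [Algebra R K]
    [IsFractionRing R K] where
  P : Type
  v : P → K → ℤ
  v_mul : ∀ (q : P) {x y : K}, x ≠ 0 → y ≠ 0 → v q (x * y) = v q x + v q y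
  v_add : ∀ (q : P) {x y : K}, x ≠ 0 → y ≠ 0 → x + y ≠ 0 → min (v q x) (v q y) ≤ v q (x + y)
  finite_support : ∀ {x : K}, x ≠ 0 → {q : P | v q x ≠ 0}.Finite
  exists_uniformizer : ∀ q : P, ∃ x : K, x ≠ 0 ∧ v q x = 1 ∧ ∀ q' : P, q' ≠ q → 0 ≤ v q' x
  mem_range_iff : ∀ {x : K}, x ≠ 0 →
    (x ∈ Set.range (algebraMap R K) ↔ ∀ q : P, 0 ≤ v q x)

namespace KrullData

variable {R K : Type} [CommRing R] [IsDomain R] [Field K] [Algebra R K] [IsFractionRing R K]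

/-- `κ.sec D ⊆ K` is the module of sections `R(⌊D⌋) = H^0(Spec R, O(⌊D⌋))`
of the ℚ-Weil divisor `D` (for an integral divisor take integer values of `D`). -/
def sec (κ : KrullData R K) (D : κ.P → ℚ) : Set K :=
  {x : K | x = 0 ∨ ∀ q : κ.P, -(D q) ≤ (κ.v q x : ℚ)}

/-- The monomials `x·Xⁱ` with `x ∈ R(⌊iD⌋)`; they generate the symbolic Rees algebra. -/
def reesSet (κ : KrullData R K) (D : κ.P → ℚ) : Set (Polynomial K) :=
  {f | ∃ (i : ℕ) (x : K), x ∈ κ.sec (fun q => (i : ℚ) * D q) ∧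
    f = Polynomial.C x * Polynomial.X ^ i}

/-- The symbolic Rees algebra (algebra of local sections)
`𝓡(X, D) = ⊕_{i ≥ 0} O_X(⌊iD⌋)`, realized inside `K[X]`. -/
noncomputable def reesAlgebra (κ : KrullData R K) (D : κ.P → ℚ) : Subalgebra R (Polynomial K) :=
  Algebra.adjoin R (κ.reesSet D)

end KrullData

/-- `Φ : K → K` is (the unique extension to `K` of) a `p^{-e}`-linear map:
additive with `Φ(a^{p^e}·x) = a·Φ(x)`. -/
def IsSemilinear (p e : ℕ) {K : Type} [Field K] (Φ : K → K) : Prop :=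
  (∀ x y : K, Φ (x + y) = Φ x + Φ y) ∧ ∀ a x : K, Φ (a ^ p ^ e * x) = a * Φ x

namespace KrullData

variable {R K : Type} [CommRing R] [IsDomain R] [Field K] [Algebra R K] [IsFractionRing R K]
  (κ : KrullData R K)

theorem v_one (q : κ.P) : κ.v q 1 = 0 := by
  have h := κ.v_mul q (x := (1 : K)) (y := 1) one_ne_zero one_ne_zero
  rw [one_mul] at h
  omega

theorem v_pow (q : κ.P) {x : K} (hx : x ≠ 0) (n : ℕ) : κ.v q (x ^ n) = n * κ.v q x := by
  induction n with
  | zero => simpa using κ.v_one q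
  | succ n ih =>
    rw [pow_succ, κ.v_mul q (pow_ne_zero n hx) hx, ih]
    push_cast
    ring

theorem v_prod_pow (q : κ.P) (T : Finset κ.P) {u : κ.P → K} (hu : ∀ t, u t ≠ 0)
    (n : κ.P → ℕ) : κ.v q (∏ t ∈ T, u t ^ n t) = ∑ t ∈ T, n t * κ.v q (u t) := by
  induction T using Finset.cons_induction with
  | empty => simpa using κ.v_one q
  | cons a T ha ih =>
    rw [Finset.prod_cons, Finset.sum_cons,
      κ.v_mul q (pow_ne_zero _ (hu a)) (Finset.prod_ne_zero_iff.mpr fun t _ => pow_ne_zero _ (hu t)),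
      κ.v_pow q (hu a), ih]

/-- A product of powers of uniformizers, `∏_{q ∈ supp D} u_q^{⌈-D q⌉}`, is a nonzero section. -/
theorem exists_ne_zero_mem_sec (D : κ.P → ℚ) (hD : (Function.support D).Finite) :
    ∃ y : K, y ≠ 0 ∧ y ∈ κ.sec D := by
  classical
  choose u hu0 hu1 hu_nonneg using κ.exists_uniformizer
  set n : κ.P → ℕ := fun q => ⌈-D q⌉₊
  have hterm_nonneg : ∀ q t, 0 ≤ (n t : ℤ) * κ.v q (u t) := by
    intro q t
    refine mul_nonneg (Int.natCast_nonneg _) ?_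
    by_cases htq : t = q
    · subst htq
      rw [hu1]
      exact zero_le_one
    · exact hu_nonneg t q (Ne.symm htq)
  refine ⟨∏ t ∈ hD.toFinset, u t ^ n t,
    Finset.prod_ne_zero_iff.mpr fun t _ => pow_ne_zero _ (hu0 t), Or.inr fun q => ?_⟩
  have hn_le : (n q : ℤ) ≤ κ.v q (∏ t ∈ hD.toFinset, u t ^ n t) := by
    rw [κ.v_prod_pow q _ hu0]
    by_cases hq : q ∈ hD.toFinset
    · calc (n q : ℤ) = n q * κ.v q (u q) := by rw [hu1, mul_one]
        _ ≤ _ := Finset.single_le_sum (fun t _ => hterm_nonneg q t) hq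
    · have hDq : D q = 0 := by simpa using hq
      simpa [n, hDq] using Finset.sum_nonneg fun t _ => hterm_nonneg q t
  calc -D q ≤ n q := Nat.le_ceil _
    _ ≤ _ := by exact_mod_cast hn_le

theorem exists_monomial_mem_reesAlgebra (D : κ.P → ℚ) (hD : (Function.support D).Finite)
    (i : ℕ) : ∃ y : K, y ≠ 0 ∧ Polynomial.C y * Polynomial.X ^ i ∈ κ.reesAlgebra D := by
  obtain ⟨y, hy0, hy⟩ := κ.exists_ne_zero_mem_sec (fun q => (i : ℚ) * D q)
    (hD.subset (Function.support_mul_subset_right (fun _ => (i : ℚ)) D))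
  exact ⟨y, hy0, Algebra.subset_adjoin ⟨i, y, hy, rfl⟩⟩

end KrullData

/-- `Ψ` is `n`-th-power semilinear over `S`: `Ψ (sⁿ g) = s Ψ g`; for `n = p^e` this is
`S`-linearity of `Ψ : F^e_* A → A`. -/
def IsPowLinearOn {A : Type*} [CommSemiring A] (n : ℕ) (S : Set A) (Ψ : A →+ A) : Prop :=
  ∀ s ∈ S, ∀ g : A, Ψ (s ^ n * g) = s * Ψ g

namespace IsPowLinearOn

section Domain

variable {A : Type*} [CommRing A] [IsDomain A] {n : ℕ} {S : Set A} {Ψ Ψ' : A →+ A}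

theorem apply_pow_mul_eq_iff (hΨ : IsPowLinearOn n S Ψ) (hΨ' : IsPowLinearOn n S Ψ')
    {s : A} (hs : s ∈ S) (hs0 : s ≠ 0) (g : A) :
    Ψ (s ^ n * g) = Ψ' (s ^ n * g) ↔ Ψ g = Ψ' g := by
  rw [hΨ s hs, hΨ' s hs, mul_right_inj' hs0]

end Domain

section Polynomial

open Polynomial

variable {R K : Type*} [CommRing R] [Field K] [Algebra R K] [IsFractionRing R K] {n : ℕ}
  {S : Subalgebra R K[X]} {Ψ Ψ' : K[X] →+ K[X]}

theorem apply_C_eq (hn : n ≠ 0) (hΨ : IsPowLinearOn n S Ψ) (hΨ' : IsPowLinearOn n S Ψ')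
    (hR : ∀ r : R, Ψ (C (algebraMap R K r)) = Ψ' (C (algebraMap R K r))) (a : K) :
    Ψ (C a) = Ψ' (C a) := by
  obtain ⟨b, c, hc, rfl⟩ := IsFractionRing.div_surjective (A := R) a
  have hc0 : algebraMap R K c ≠ 0 := (IsLocalization.map_units K ⟨c, hc⟩).ne_zero
  have hcS : C (algebraMap R K c) ∈ S := by
    rw [← Polynomial.algebraMap_apply]
    exact S.algebraMap_mem c
  have hclear : C (algebraMap R K c) ^ n * C (algebraMap R K b / algebraMap R K c) =
      C (algebraMap R K (c ^ (n - 1) * b)) := by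
    rw [← C_pow, ← C_mul]
    congr 1
    rw [map_mul, map_pow, ← Nat.sub_one_add_one hn, pow_succ, Nat.add_sub_cancel]
    field_simp
  rw [← hΨ.apply_pow_mul_eq_iff hΨ' hcS (C_ne_zero.mpr hc0), hclear]
  exact hR _

theorem eq_of_eq_on_algebraMap (hn : n ≠ 0) (hΨ : IsPowLinearOn n S Ψ)
    (hΨ' : IsPowLinearOn n S Ψ') (hS : ∀ i : ℕ, ∃ y : K, y ≠ 0 ∧ C y * X ^ i ∈ S)
    (hΨ_hom : ∀ (x : K) (j : ℕ), ¬ n ∣ j → Ψ (C x * X ^ j) = 0)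
    (hΨ'_hom : ∀ (x : K) (j : ℕ), ¬ n ∣ j → Ψ' (C x * X ^ j) = 0)
    (hR : ∀ r : R, Ψ (C (algebraMap R K r)) = Ψ' (C (algebraMap R K r))) (g : K[X]) :
    Ψ g = Ψ' g := by
  induction g using Polynomial.induction_on' with
  | add f g hf hg => rw [map_add, map_add, hf, hg]
  | monomial j x =>
    rw [← C_mul_X_pow_eq_monomial]
    by_cases hj : n ∣ j
    · obtain ⟨i, rfl⟩ := hj
      obtain ⟨y, hy0, hyS⟩ := hS i
      have hmonomial : C x * X ^ (n * i) = (C y * X ^ i) ^ n * C (x / y ^ n) := by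
        rw [mul_pow, ← C_pow, ← pow_mul, mul_right_comm, ← C_mul,
          mul_div_cancel₀ x (pow_ne_zero n hy0), mul_comm i]
      rw [hmonomial, hΨ.apply_pow_mul_eq_iff hΨ' hyS (by simp [hy0])]
      exact apply_C_eq hn hΨ hΨ' hR _
    · rw [hΨ_hom x j hj, hΨ'_hom x j hj]

end Polynomial

end IsPowLinearOn

open Polynomial in
theorem homogeneous_map_determined_by_degree_zero_general
    {R K : Type} [CommRing R] [IsDomain R]
    [Field K] [Algebra R K] [IsFractionRing R K]
    (p e : ℕ) (hp : p.Prime)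
    (κ : KrullData R K)
    (D : κ.P → ℤ) (hD : (Function.support D).Finite)  -- a Weil divisor on Spec R
    (Ψ Ψ' : Polynomial K →+ Polynomial K)
    -- `Ψ, Ψ'` are `S`-linear (i.e. `p^{-e}`-linear over `S`):
    (hΨlin : ∀ s ∈ κ.reesAlgebra (fun q => (D q : ℚ)), ∀ g : Polynomial K,
      Ψ (s ^ p ^ e * g) = s * Ψ g)
    (hΨ'lin : ∀ s ∈ κ.reesAlgebra (fun q => (D q : ℚ)), ∀ g : Polynomial K,
      Ψ' (s ^ p ^ e * g) = s * Ψ' g)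
    -- `Ψ, Ψ'` are homogeneous for the `ℤ[1/p^e]`-grading:
    (hΨhom : ∀ (x : K) (j : ℕ),
      (p ^ e ∣ j → ∃ y : K, Ψ (C x * X ^ j) = C y * X ^ (j / p ^ e)) ∧
      (¬ p ^ e ∣ j → Ψ (C x * X ^ j) = 0))
    (hΨ'hom : ∀ (x : K) (j : ℕ),
      (p ^ e ∣ j → ∃ y : K, Ψ' (C x * X ^ j) = C y * X ^ (j / p ^ e)) ∧
      (¬ p ^ e ∣ j → Ψ' (C x * X ^ j) = 0))
    -- `Ψ, Ψ'` agree on the degree-zero part `F^e_* R`: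
    (hagree : ∀ r : R, Ψ (C (algebraMap R K r)) = Ψ' (C (algebraMap R K r))) :
    ∀ g ∈ κ.reesAlgebra (fun q => (D q : ℚ)), Ψ g = Ψ' g := by
  intro g _
  have hD' : (Function.support fun q => (D q : ℚ)).Finite := by
    simpa [Function.support] using hD
  exact IsPowLinearOn.eq_of_eq_on_algebraMap (pow_ne_zero e hp.ne_zero) hΨlin hΨ'lin
    (κ.exists_monomial_mem_reesAlgebra _ hD') (fun x j => (hΨhom x j).2)
    (fun x j => (hΨ'hom x j).2) hagree g

open Polynomial in
/-- every homogeneous `S`-linear map `φ_S : F^e_* S → S` on the symbolic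
Rees algebra `S = ⊕_{i≥0} R(iD)` (realized inside `K[X]`, with `F^e_* S` carrying the
`ℤ[1/p^e]`-grading `[F^e_* S]_{i/p^e} = F^e_* R(iD)`) is completely determined by its
restriction to the degree-zero part `F^e_* R`; together with the extension result
(Statement 3), restriction to degree zero is a bijection between homogeneous `S`-linear
maps `F^e_* S → S` and `R`-linear maps `F^e_* R → R`. -/
theorem homogeneous_map_determined_by_degree_zero
    {R K : Type} [CommRing R] [IsDomain R] [IsNoetherianRing R] [IsIntegrallyClosed R]
    [Field K] [Algebra R K] [IsFractionRing R K]
    (p e : ℕ) (hp : p.Prime) [CharP R p] [ExpChar R p]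
    (hFfin : (frobenius R p).Finite)  -- R is F-finite
    (he : 0 < e)
    (κ : KrullData R K)
    (D : κ.P → ℤ) (hD : (Function.support D).Finite)  -- a Weil divisor on Spec R
    (Ψ Ψ' : Polynomial K →+ Polynomial K)
    -- `Ψ, Ψ'` are `S`-linear (i.e. `p^{-e}`-linear over `S`):
    (hΨlin : ∀ s ∈ κ.reesAlgebra (fun q => (D q : ℚ)), ∀ g : Polynomial K,
      Ψ (s ^ p ^ e * g) = s * Ψ g)
    (hΨ'lin : ∀ s ∈ κ.reesAlgebra (fun q => (D q : ℚ)), ∀ g : Polynomial K,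
      Ψ' (s ^ p ^ e * g) = s * Ψ' g)
    -- `Ψ, Ψ'` are homogeneous for the `ℤ[1/p^e]`-grading:
    (hΨhom : ∀ (x : K) (j : ℕ),
      (p ^ e ∣ j → ∃ y : K, Ψ (C x * X ^ j) = C y * X ^ (j / p ^ e)) ∧
      (¬ p ^ e ∣ j → Ψ (C x * X ^ j) = 0))
    (hΨ'hom : ∀ (x : K) (j : ℕ),
      (p ^ e ∣ j → ∃ y : K, Ψ' (C x * X ^ j) = C y * X ^ (j / p ^ e)) ∧
      (¬ p ^ e ∣ j → Ψ' (C x * X ^ j) = 0))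
    -- `Ψ, Ψ'` map `S` into `S`:
    (hΨS : ∀ g ∈ κ.reesAlgebra (fun q => (D q : ℚ)),
      Ψ g ∈ κ.reesAlgebra (fun q => (D q : ℚ)))
    (hΨ'S : ∀ g ∈ κ.reesAlgebra (fun q => (D q : ℚ)),
      Ψ' g ∈ κ.reesAlgebra (fun q => (D q : ℚ)))
    -- `Ψ, Ψ'` agree on the degree-zero part `F^e_* R`:
    (hagree : ∀ r : R, Ψ (C (algebraMap R K r)) = Ψ' (C (algebraMap R K r))) :
    ∀ g ∈ κ.reesAlgebra (fun q => (D q : ℚ)), Ψ g = Ψ' g :=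
  homogeneous_map_determined_by_degree_zero_general p e hp κ D hD Ψ Ψ' hΨlin hΨ'lin hΨhom hΨ'hom
    hagree
end
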